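/- arXiv:2508.12675 — 5 statements merged into one kernel-verified Lean document; each statement's English description precedes it below -/
import Mathlib

section
/- Let T[1..n] have LZ77 parse T[p_1..q_1], ..., T[p_z..q_z], and suppose P[1..m] (m ≥ 1) occurs at position s and this occurrence touches no phrase boundary, so that p_j ≤ s and s+m−1 ≤ q_j − 1 for some phrase j. Then q_j > p_j, and for any source position x of phrase j (i.e., x < p_j with T[x..x+(q_j−p_j)−1] = T[p_j..q_j−1]), the pattern P also occurs at position s' = x + (s − p_j), and s' < s. In particular, P occurs at some position strictly smaller than s. -/
namespace RStarIndex

variable {α : Type*}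

/-- The substring of `T` of length `len` starting at 0-based position `s`,
    i.e. `T[s..s+len-1]` in 1-based notation `T[s+1..s+len]`. -/
def Slice (T : List α) (s len : ℕ) : List α := (T.drop s).take len

/-- `U` occurs in `T` at 0-based position `s`, i.e. `T[s..s+|U|-1] = U`. -/
def OccursAt (T U : List α) (s : ℕ) : Prop :=
  s + U.length ≤ T.length ∧ Slice T s U.length = U

/-- `ph` is the LZ77 parse of `T`: a nonempty list of phrases, each given by its
    (start, end) pair of 0-based inclusive positions.  The first phrase starts at
    position `0`, consecutive phrases are adjacent, the last phrase ends at the last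
    position of `T`, and each phrase consists of the longest prefix of the remaining
    text that occurs starting at some strictly earlier position (possibly the empty
    prefix, and capped so that one additional explicit character fits) followed by
    one additional character. -/
def IsLZ77Parse (T : List α) (ph : List (ℕ × ℕ)) : Prop :=
  0 < ph.length ∧
  (∀ (j : ℕ) (h : j < ph.length), ph[j].1 ≤ ph[j].2 ∧ ph[j].2 < T.length) ∧
  (∀ (h : 0 < ph.length), ph[0].1 = 0) ∧
  (∀ (h : ph.length - 1 < ph.length), ph[ph.length - 1].2 + 1 = T.length) ∧
  (∀ (j : ℕ) (h : j + 1 < ph.length), ph[j + 1].1 = (ph[j]'(by omega)).2 + 1) ∧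
  (∀ (j : ℕ) (h : j < ph.length),
    ph[j].1 = ph[j].2 ∨
      ∃ x < ph[j].1, OccursAt T (Slice T ph[j].1 (ph[j].2 - ph[j].1)) x) ∧
  (∀ (j : ℕ) (h : j < ph.length), ph[j].2 + 1 < T.length →
    ¬ ∃ x < ph[j].1, OccursAt T (Slice T ph[j].1 (ph[j].2 - ph[j].1 + 1)) x)

/-- The occurrence of a length-`m` pattern at position `s` touches a phrase boundary
    of the parse `ph`: some phrase-end position `q_j` satisfies `s ≤ q_j ≤ s+m-1`. -/
def TouchesBoundary (ph : List (ℕ × ℕ)) (s m : ℕ) : Prop :=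
  ∃ (j : ℕ) (h : j < ph.length), s ≤ ph[j].2 ∧ ph[j].2 < s + m


/-- If an occurrence of a nonempty pattern `P` at position `s` lies
entirely within the copied part of phrase `j`, then that phrase has a nonempty copied
part (`p_j < q_j`), every source position `x` of the phrase yields an occurrence of
`P` at `x + (s - p_j) < s`, and in particular `P` occurs at some position strictly
smaller than `s`. -/
theorem in_copy_occurrence_maps_left [Fintype α]
    (T : List α) (ph : List (ℕ × ℕ)) (hph : IsLZ77Parse T ph)
    (P : List α) (hm : 1 ≤ P.length) (s : ℕ) (hocc : OccursAt T P s)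
    (j : ℕ) (h : j < ph.length)
    (hps : ph[j].1 ≤ s) (hse : s + P.length ≤ ph[j].2) :
    ph[j].1 < ph[j].2 ∧
    (∀ x < ph[j].1, OccursAt T (Slice T ph[j].1 (ph[j].2 - ph[j].1)) x →
      OccursAt T P (x + (s - ph[j].1)) ∧ x + (s - ph[j].1) < s) ∧
    ∃ s' < s, OccursAt T P s' := by
  obtain ⟨_, hbound, _, _, _, hsrc, _⟩ := hph
  set p := ph[j].1 with hp
  set q := ph[j].2 with hq
  obtain ⟨hpq, hqT⟩ := hbound j h
  have hm' : s + P.length ≤ q := hse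
  have hplt : p < q := by omega
  have key : ∀ x < p, OccursAt T (Slice T p (q - p)) x →
      OccursAt T P (x + (s - p)) ∧ x + (s - p) < s := by
    intro x hx hxo
    obtain ⟨hxl, hxs⟩ := hxo
    have hlen : (Slice T p (q - p)).length = q - p := by
      simp [Slice]; omega
    have hshift : ∀ (a : ℕ), Slice T (a + (s - p)) P.length
        = ((Slice T a (q - p)).drop (s - p)).take P.length := by
      intro a
      simp only [Slice, List.drop_take, List.drop_drop, List.take_take]
      congr 1 <;> omega
    rw [hlen] at hxl hxs
    have h1 : Slice T (x + (s - p)) P.length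
        = Slice T (p + (s - p)) P.length := by
      rw [hshift, hshift, hxs]
    have h2 : p + (s - p) = s := by omega
    rw [h2] at h1
    refine ⟨⟨?_, ?_⟩, ?_⟩
    · omega
    · rw [h1]; exact hocc.2
    · omega
  refine ⟨hplt, key, ?_⟩
  rcases hsrc j h with heq | ⟨x, hx, hxo⟩
  · omega
  · obtain ⟨ho, hlt⟩ := key x hx hxo
    exact ⟨x + (s - p), hlt, ho⟩

end RStarIndex
end

section
/- Let T[1..n] have LZ77 parse T[p_1..q_1], ..., T[p_z..q_z] and let P[1..m] (m ≥ 1) occur in T. Then the leftmost occurrence of P in T touches a phrase boundary: if s is the smallest position with T[s..s+m−1] = P, then there exists j with s ≤ q_j ≤ s+m−1. -/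
namespace RStarIndex

variable {α : Type*}

lemma slice_sub (T : List α) (a L d m : ℕ) (h : d + m ≤ L) :
    Slice T (a + d) m = ((Slice T a L).drop d).take m := by
  unfold Slice
  rw [List.drop_take, List.take_take, Nat.add_comm a d, ← List.drop_drop,
    List.drop_drop, List.drop_drop, Nat.add_comm]
  congr 1
  omega

lemma exists_phrase (T : List α) (ph : List (ℕ × ℕ)) (hph : IsLZ77Parse T ph)
    (i : ℕ) (hi : i < T.length) :
    ∃ j, ∃ h : j < ph.length, ph[j].1 ≤ i ∧ i ≤ ph[j].2 := by
  obtain ⟨hpos, hbnd, h0, hlast, hadj, -, -⟩ := hph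
  have hex : ∃ j, j < ph.length ∧ i ≤ (ph.getD j (0,0)).2 := by
    refine ⟨ph.length - 1, by omega, ?_⟩
    have h := hlast (by omega)
    rw [List.getD_eq_getElem ph (0,0) (by omega : ph.length - 1 < ph.length)]
    omega
  classical
  let j := Nat.find hex
  have hj := Nat.find_spec hex
  obtain ⟨hjlt, hje⟩ := hj
  rw [List.getD_eq_getElem ph (0,0) hjlt] at hje
  refine ⟨j, hjlt, ?_, hje⟩
  rcases Nat.eq_zero_or_pos j with hz | hz
  · simp only [hz]
    rw [h0 hpos]; omega
  · have hprev : ¬ (j - 1 < ph.length ∧ i ≤ (ph.getD (j-1) (0,0)).2) :=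
      Nat.find_min hex (by omega)
    push_neg at hprev
    have := hprev (by omega)
    rw [List.getD_eq_getElem ph (0,0) (by omega : j - 1 < ph.length)] at this
    have hadj' := hadj (j - 1) (by omega)
    have hje' : j - 1 + 1 = j := by omega
    simp only [hje'] at hadj'
    omega

/-- The leftmost occurrence of a nonempty pattern `P` in `T` touches
an LZ77 phrase boundary. -/
theorem leftmost_occurrence_touches_boundary [Fintype α]
    (T : List α) (ph : List (ℕ × ℕ)) (hph : IsLZ77Parse T ph)
    (P : List α) (hm : 1 ≤ P.length) (s : ℕ) (hocc : OccursAt T P s)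
    (hleft : ∀ s' < s, ¬ OccursAt T P s') :
    TouchesBoundary ph s P.length := by
  by_contra hnb
  unfold TouchesBoundary at hnb
  push_neg at hnb
  set m := P.length with hmdef
  have hslen : s + m ≤ T.length := hocc.1
  obtain ⟨j, hj, hpj, hqj⟩ := exists_phrase T ph hph s (by omega)
  have hq_ge : s + m ≤ ph[j].2 := by
    have := hnb j hj hqj
    omega
  obtain ⟨-, hbnd, -, -, -, hcopy, -⟩ := hph
  have hqlt := (hbnd j hj).2
  rcases hcopy j hj with heq | ⟨x, hx, hU⟩
  · omega
  · set p := ph[j].1 with hpdef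
    set L := ph[j].2 - p with hLdef
    have hLlen : (Slice T p L).length = L := by
      unfold Slice
      rw [List.length_take, List.length_drop]
      omega
    obtain ⟨hU1, hU2⟩ := hU
    rw [hLlen] at hU1 hU2
    set d := s - p with hddef
    have hdm : d + m ≤ L := by omega
    have hsp : s = p + d := by omega
    have hnew : OccursAt T P (x + d) := by
      constructor
      · omega
      · have h1 : Slice T (p + d) m = ((Slice T p L).drop d).take m :=
          slice_sub T p L d m hdm
        have h2 : Slice T (x + d) m = ((Slice T x L).drop d).take m :=
          slice_sub T x L d m hdm
        rw [h2, hU2, ← h1, ← hsp]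
        exact hocc.2
    exact hleft (x + d) (by omega) hnew


end RStarIndex
end

section
/- Let T[1..n] have LZ77 parse T[p_1..q_1], ..., T[p_z..q_z]. Then the set Γ = {q_1, ..., q_z} of phrase-end positions is a string attractor of T: for every nonempty substring of T there is an occurrence of that substring in T whose interval of positions contains some element of Γ. Equivalently, every nonempty pattern P that occurs in T has at least one occurrence touching a phrase boundary. -/
namespace RStarIndex

variable {α : Type*}

lemma slice_eq_sub (T : List α) (y L d m : ℕ) (hdm : d + m ≤ L) :
    Slice T (y + d) m = ((Slice T y L).drop d).take m := by
  simp only [Slice, List.drop_take, List.drop_drop, List.take_take]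
  rw [inf_eq_left.mpr (by omega : m ≤ L - d)]

lemma length_slice (T : List α) (s len : ℕ) :
    (Slice T s len).length = min len (T.length - s) := by
  simp [Slice]

lemma cover_le (T : List α) (ph : List (ℕ × ℕ)) (hph : IsLZ77Parse T ph) :
    ∀ (j : ℕ) (h : j < ph.length), ∀ i ≤ ph[j].2,
      ∃ (k : ℕ) (hk : k < ph.length), ph[k].1 ≤ i ∧ i ≤ ph[k].2 := by
  obtain ⟨hpos, hran, hfirst, hlast, hadj, -, -⟩ := hph
  intro j
  induction j with
  | zero => intro h i hi; exact ⟨0, h, by rw [hfirst h]; omega, hi⟩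
  | succ j ih =>
    intro h i hi
    rcases le_or_gt (ph[j+1].1) i with hle | hlt
    · exact ⟨j+1, h, hle, hi⟩
    · have := hadj j h
      exact ih (by omega) i (by omega)

lemma cover (T : List α) (ph : List (ℕ × ℕ)) (hph : IsLZ77Parse T ph) :
    ∀ i < T.length, ∃ (k : ℕ) (hk : k < ph.length), ph[k].1 ≤ i ∧ i ≤ ph[k].2 := by
  intro i hi
  have hpos := hph.1
  have hlast := hph.2.2.2.1 (by omega)
  exact cover_le T ph hph (ph.length - 1) (by omega) i (by omega)

lemma main_attractor (T : List α) (ph : List (ℕ × ℕ)) (hph : IsLZ77Parse T ph)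
    (P : List α) (hP : P ≠ []) (hocc : ∃ t, OccursAt T P t) :
    ∃ s, OccursAt T P s ∧ TouchesBoundary ph s P.length := by
  classical
  set m := P.length with hm
  have hm1 : 1 ≤ m := by
    rw [hm]; exact List.length_pos_iff.mpr hP
  let s := Nat.find hocc
  have hs : OccursAt T P s := Nat.find_spec hocc
  refine ⟨s, hs, ?_⟩
  by_contra hnt
  obtain ⟨hslen, hsslice⟩ := hs
  have hsT : s < T.length := by omega
  obtain ⟨j, hj, hpj, hqj⟩ := cover T ph hph s hsT
  -- since boundary not touched, ph[j].2 ≥ s + m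
  have hq : s + m ≤ ph[j].2 := by
    by_contra hq
    exact hnt ⟨j, hj, hqj, by omega⟩
  set p := ph[j].1 with hp
  set q := ph[j].2 with hqdef
  have hpq : p < q := by omega
  have hqT : q < T.length := (hph.2.1 j hj).2
  rcases hph.2.2.2.2.2.1 j hj with heq | ⟨x, hx, hxocc⟩
  · omega
  · -- shift the occurrence
    set L := q - p with hL
    have hlenU : (Slice T p L).length = L := by
      rw [length_slice]; omega
    obtain ⟨hxlen, hxslice⟩ := hxocc
    rw [hlenU] at hxlen hxslice
    set d := s - p with hd
    have hdm : d + m ≤ L := by omega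
    have h1 : Slice T (p + d) m = Slice T (x + d) m := by
      rw [slice_eq_sub T p L d m hdm, slice_eq_sub T x L d m hdm, hxslice]
    have hpd : p + d = s := by omega
    have hocc2 : OccursAt T P (x + d) := by
      constructor
      · omega
      · rw [← hm, ← h1, hpd]; exact hsslice
    have : s ≤ x + d := Nat.find_min' hocc hocc2
    omega

/-- The set of LZ77 phrase-end positions is a string attractor of
`T`: every nonempty substring `T[a..b]` of `T` has an occurrence touching a phrase
boundary, and equivalently every nonempty pattern occurring in `T` has an occurrence
touching a phrase boundary. -/
theorem phrase_ends_are_string_attractor [Fintype α]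
    (T : List α) (ph : List (ℕ × ℕ)) (hph : IsLZ77Parse T ph) :
    (∀ a b : ℕ, a ≤ b → b < T.length →
      ∃ s, OccursAt T (Slice T a (b + 1 - a)) s ∧ TouchesBoundary ph s (b + 1 - a)) ∧
    (∀ P : List α, P ≠ [] → (∃ t, OccursAt T P t) →
      ∃ s, OccursAt T P s ∧ TouchesBoundary ph s P.length) := by
  constructor
  · intro a b hab hb
    set P := Slice T a (b + 1 - a) with hPdef
    have hPlen : P.length = b + 1 - a := by
      rw [hPdef, length_slice]; omega
    have hPocc : OccursAt T P a := by
      refine ⟨by omega, ?_⟩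
      rw [hPlen]
    have hPne : P ≠ [] := by
      intro h; rw [h] at hPlen; simp at hPlen; omega
    obtain ⟨s, h1, h2⟩ := main_attractor T ph hph P hPne ⟨a, hPocc⟩
    rw [hPlen] at h2
    exact ⟨s, h1, h2⟩
  · exact main_attractor T ph hph


end RStarIndex
end

section
/- Let T be a string over a linearly ordered alphabet and let P be a string. Among the suffixes of T, those having P as a prefix form a lexicographically contiguous block: if A, B, C are suffixes of T with A ≤ B ≤ C in the lexicographic order, and both A and C have P as a prefix, then B has P as a prefix. -/
namespace RStarIndex

variable {α : Type*}

private theorem cons_le_cons_iff' {β : Type*} [LinearOrder β] {a b : β} {l l' : List β} :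
    a :: l ≤ b :: l' ↔ a < b ∨ (a = b ∧ l ≤ l') := by
  rw [le_iff_lt_or_eq, le_iff_lt_or_eq]
  constructor
  · rintro (h | h)
    · cases h with
      | cons h => exact Or.inr ⟨rfl, Or.inl h⟩
      | rel h => exact Or.inl h
    · injection h with h1 h2; exact Or.inr ⟨h1, Or.inr h2⟩
  · rintro (h | ⟨rfl, (h | rfl)⟩)
    · exact Or.inl (List.Lex.rel h)
    · exact Or.inl (List.Lex.cons h)
    · exact Or.inr rfl

private theorem key_lemma {β : Type*} [LinearOrder β] :
    ∀ (P A B C : List β), A ≤ B → B ≤ C → P <+: A → P <+: C → P <+: B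
  | [], _, _, _, _, _, _, _ => List.nil_prefix
  | p :: P', A, B, C, hAB, hBC, hPA, hPC => by
    obtain ⟨tA, rfl⟩ := hPA
    obtain ⟨tC, rfl⟩ := hPC
    cases B with
    | nil => exact absurd hAB (not_le_of_gt (List.nil_lt_cons _ _))
    | cons b B' =>
      simp only [List.cons_append] at hAB hBC
      rcases cons_le_cons_iff'.mp hAB with h1 | ⟨rfl, h1⟩ <;>
        rcases cons_le_cons_iff'.mp hBC with h2 | ⟨h2, h2'⟩
      · exact absurd (h1.trans h2) (lt_irrefl _)
      · exact absurd (h2 ▸ h1) (lt_irrefl _)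
      · exact absurd h2 (lt_irrefl _)
      · obtain ⟨t, rfl⟩ := key_lemma P' (P' ++ tA) B' (P' ++ tC) h1 h2'
          (List.prefix_append _ _) (List.prefix_append _ _)
        exact ⟨t, rfl⟩

/-- Among the suffixes of `T`, those having `P` as a prefix form a
lexicographically contiguous block: if `A ≤ B ≤ C` are suffixes of `T` and both `A`
and `C` have `P` as a prefix, then so does `B`. -/
theorem suffixes_with_prefix_lex_contiguous {β : Type*} [LinearOrder β]
    (T P A B C : List β) (hA : A <:+ T) (hB : B <:+ T) (hC : C <:+ T)
    (hAB : A ≤ B) (hBC : B ≤ C) (hPA : P <+: A) (hPC : P <+: C) :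
    P <+: B :=
  key_lemma P A B C hAB hBC hPA hPC

end RStarIndex
end

section
/- Let T[1..n] have LZ77 parse T[p_1..q_1], ..., T[p_z..q_z], and for each phrase j with q_j > p_j fix a source position x_j < p_j with T[x_j..x_j+(q_j−p_j)−1] = T[p_j..q_j−1]. Then for every occurrence of P[1..m] (m ≥ 1) at position s in T, there is a finite sequence of positions s = s_0 > s_1 > ... > s_k such that P occurs at each s_t, each s_{t+1} is obtained from s_t by the source map (s_{t+1} = x_j + (s_t − p_j) where j is the phrase with p_j ≤ s_t and s_t+m−1 ≤ q_j − 1), and the occurrence of P at s_k touches a phrase boundary. -/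
namespace RStarIndex

variable {α : Type*}

lemma slice_length (T : List α) (s len : ℕ) (h : s + len ≤ T.length) :
    (Slice T s len).length = len := by
  simp [Slice]; omega

lemma slice_getElem (T : List α) (s len i : ℕ) (hi : i < len) (h : s + len ≤ T.length) :
    (Slice T s len)[i]'(by rw [slice_length T s len h]; exact hi) = T[s+i]'(by omega) := by
  simp [Slice, List.getElem_take, List.getElem_drop]

lemma occursAt_getElem {T U : List α} {s : ℕ} (h : OccursAt T U s) (i : ℕ) (hi : i < U.length) :
    T[s+i]'(by have := h.1; omega) = U[i] := by
  obtain ⟨hlen, heq⟩ := h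
  have h2 := slice_getElem T s U.length i hi hlen
  rw [← h2]
  exact List.getElem_of_eq heq (by rw [slice_length T s U.length hlen]; exact hi)

lemma occursAt_of_getElem {T U : List α} {s : ℕ}
    (hlen : s + U.length ≤ T.length)
    (h : ∀ i (hi : i < U.length), T[s+i]'(by omega) = U[i]) :
    OccursAt T U s := by
  refine ⟨hlen, ?_⟩
  apply List.ext_getElem
  · exact slice_length T s U.length hlen
  · intro i h1 h2
    rw [slice_getElem T s U.length i h2 hlen]
    exact h i h2

lemma getElem_idx_eq (T : List α) {n n' : ℕ} (h : n = n') (hn : n < T.length) :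
    T[n] = T[n']'(h ▸ hn) := by subst h; rfl

lemma occursAt_sub {T P : List α} {a L x s : ℕ}
    (hL : a + L ≤ T.length)
    (hx : OccursAt T (Slice T a L) x)
    (has : a ≤ s) (hsm : s + P.length ≤ a + L)
    (hP : OccursAt T P s) :
    OccursAt T P (x + (s - a)) := by
  have hlenS : (Slice T a L).length = L := slice_length T a L hL
  have hx1 : x + L ≤ T.length := by have := hx.1; omega
  have hP1 := hP.1
  apply occursAt_of_getElem (by omega)
  intro i hi
  have e1 : x + (s - a) + i = x + ((s - a) + i) := by omega
  have e2 : a + (s - a + i) = s + i := by omega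
  have h1 := occursAt_getElem hx ((s - a) + i) (by omega)
  have h2 := slice_getElem T a L ((s - a) + i) (by omega) hL
  have h3 := occursAt_getElem hP i hi
  calc T[x + (s - a) + i]'(by omega) = T[x + ((s - a) + i)]'(by omega) :=
        getElem_idx_eq T e1 (by omega)
    _ = (Slice T a L)[(s - a) + i]'(by rw [hlenS]; omega) := h1
    _ = T[a + ((s - a) + i)]'(by omega) := h2
    _ = T[s + i]'(by omega) := getElem_idx_eq T e2 (by omega)
    _ = P[i] := h3

lemma coverage (T : List α) (ph : List (ℕ × ℕ)) (hph : IsLZ77Parse T ph)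
    (i : ℕ) (hi : i < T.length) :
    ∃ (j : ℕ) (h : j < ph.length), ph[j].1 ≤ i ∧ i ≤ ph[j].2 := by
  obtain ⟨hpos, hbd, h0, hlast, hadj, -, -⟩ := hph
  have hlast' : i ≤ (ph[ph.length - 1]'(by omega)).2 := by
    have := hlast (by omega); omega
  suffices h : ∀ j (hj : j < ph.length), i ≤ (ph[j]'hj).2 →
      ∃ (j' : ℕ) (h' : j' < ph.length), ph[j'].1 ≤ i ∧ i ≤ ph[j'].2 by
    exact h (ph.length - 1) (by omega) hlast'
  intro j
  induction j with
  | zero => intro hj hle; exact ⟨0, hj, by rw [h0 hpos]; exact Nat.zero_le i, hle⟩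
  | succ n ih =>
    intro hj hle
    by_cases hc : (ph[n+1]'hj).1 ≤ i
    · exact ⟨n+1, hj, hc, hle⟩
    · have := hadj n hj
      exact ih (by omega) (by omega)

/-- Fix, for each phrase `j` with a nonempty copied part, a source
position `src j`.  Then from every occurrence of a nonempty pattern `P` at position
`s` there is a finite strictly decreasing chain of occurrences `s = s_0 > s_1 > ... >
s_k`, each obtained from the previous one by the source map, whose last element is an
occurrence touching a phrase boundary. -/
theorem occurrence_chain_reaches_boundary [Fintype α]
    (T : List α) (ph : List (ℕ × ℕ)) (hph : IsLZ77Parse T ph)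
    (src : ℕ → ℕ)
    (hsrc : ∀ (j : ℕ) (h : j < ph.length), ph[j].1 < ph[j].2 →
      src j < ph[j].1 ∧ OccursAt T (Slice T ph[j].1 (ph[j].2 - ph[j].1)) (src j))
    (P : List α) (hm : 1 ≤ P.length) (s : ℕ) (hocc : OccursAt T P s) :
    ∃ (k : ℕ) (seq : ℕ → ℕ),
      seq 0 = s ∧
      (∀ t ≤ k, OccursAt T P (seq t)) ∧
      (∀ t < k, seq (t + 1) < seq t ∧
        ∃ (j : ℕ) (h : j < ph.length),
          ph[j].1 ≤ seq t ∧ seq t + P.length ≤ ph[j].2 ∧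
          seq (t + 1) = src j + (seq t - ph[j].1)) ∧
      TouchesBoundary ph (seq k) P.length := by
  suffices H : ∀ s, OccursAt T P s →
      ∃ (k : ℕ) (seq : ℕ → ℕ),
        seq 0 = s ∧
        (∀ t ≤ k, OccursAt T P (seq t)) ∧
        (∀ t < k, seq (t + 1) < seq t ∧
          ∃ (j : ℕ) (h : j < ph.length),
            ph[j].1 ≤ seq t ∧ seq t + P.length ≤ ph[j].2 ∧
            seq (t + 1) = src j + (seq t - ph[j].1)) ∧
        TouchesBoundary ph (seq k) P.length by
    exact H s hocc
  clear hocc s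
  intro s
  induction s using Nat.strong_induction_on with
  | _ s ih =>
  intro hocc
  by_cases htb : TouchesBoundary ph s P.length
  · exact ⟨0, fun _ => s, rfl, fun t _ => hocc, fun t ht => absurd ht (by omega), htb⟩
  · have hs : s < T.length := by have := hocc.1; omega
    obtain ⟨j, hj, hj1, hj2⟩ := coverage T ph hph s hs
    have hqm : s + P.length ≤ (ph[j]'hj).2 := by
      by_contra hc
      exact htb ⟨j, hj, hj2, by omega⟩
    have hpq : (ph[j]'hj).1 < (ph[j]'hj).2 := by omega
    obtain ⟨hx, hoccx⟩ := hsrc j hj hpq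
    have hqT : (ph[j]'hj).2 < T.length := (hph.2.1 j hj).2
    have hocc' : OccursAt T P (src j + (s - (ph[j]'hj).1)) :=
      occursAt_sub (a := (ph[j]'hj).1) (L := (ph[j]'hj).2 - (ph[j]'hj).1)
        (by omega) hoccx hj1 (by omega) hocc
    have hs'lt : src j + (s - (ph[j]'hj).1) < s := by omega
    obtain ⟨k, seq, hseq0, hseqocc, hseqstep, hseqtb⟩ := ih _ hs'lt hocc'
    refine ⟨k + 1, fun t => if t = 0 then s else seq (t - 1), by simp, ?_, ?_, ?_⟩
    · intro t ht
      by_cases h0 : t = 0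
      · simpa [h0] using hocc
      · simp only [if_neg h0]
        exact hseqocc (t - 1) (by omega)
    · intro t ht
      by_cases h0 : t = 0
      · subst h0
        simp only [Nat.zero_add, if_neg one_ne_zero, if_pos rfl, Nat.sub_self, hseq0]
        exact ⟨hs'lt, j, hj, hj1, hqm, rfl⟩
      · simp only [if_neg h0, if_neg (by omega : t + 1 ≠ 0)]
        have e : t + 1 - 1 = (t - 1) + 1 := by omega
        rw [e]
        exact hseqstep (t - 1) (by omega)
    · simp only [if_neg (by omega : k + 1 ≠ 0)]
      simpa using hseqtb


end RStarIndex
end
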